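/- arXiv:2204.02593 — 6 statements merged into one kernel-verified Lean document; each statement's English description precedes it below -/
import Mathlib

section
/- Let Ψ: ℝ → ℝ be odd, nondecreasing, bounded, and strictly increasing on some interval, and let p: ℝ → ℝ₊ be a symmetric probability density that is strictly unimodal, i.e., p(0) < ∞ and p(v₁) < p(v₂) whenever |v₁| > |v₂|. Define φ(w) = ∫ Ψ(w+u) p(u) du. Then φ(a) > 0 for every a > 0. -/
open MeasureTheory

/-- If `Ψ` is odd, nondecreasing, bounded and strictly increasing somewhere, and `p` is a
symmetric strictly unimodal probability density, then `φ(a) = ∫ Ψ(a+u) p(u) du > 0` for `a > 0`. -/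
theorem phi_positive
    (Ψ p φ : ℝ → ℝ) (C₂ : ℝ)
    (hΨmeas : Measurable Ψ)
    (hΨodd : ∀ x : ℝ, Ψ (-x) = -Ψ x)
    (hΨmono : Monotone Ψ)
    (hΨbdd : ∀ v : ℝ, |Ψ v| ≤ C₂)
    (hΨstrict : ∃ x y : ℝ, x < y ∧ Ψ x < Ψ y)
    (hp_nonneg : ∀ u : ℝ, 0 ≤ p u)
    (hp_meas : Measurable p)
    (hp_int : ∫ u : ℝ, p u = 1)
    (hp_symm : ∀ u : ℝ, p (-u) = p u)
    (hp_unimodal : ∀ v₁ v₂ : ℝ, |v₂| < |v₁| → p v₁ < p v₂)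
    (hφ : ∀ w : ℝ, φ w = ∫ u : ℝ, Ψ (w + u) * p u) :
    ∀ a : ℝ, 0 < a → 0 < φ a := by
  intro a ha
  -- p is positive everywhere
  have hp_pos : ∀ u : ℝ, 0 < p u := by
    intro u
    have h0 : (0:ℝ) ≤ abs u + 1 := by positivity
    have h1 : |u| < abs (abs u + 1) := by
      rw [abs_of_nonneg h0]
      linarith
    exact lt_of_le_of_lt (hp_nonneg (abs u + 1)) (hp_unimodal (abs u + 1) u h1)
  -- Ψ 0 = 0
  have hΨ0 : Ψ 0 = 0 := by
    have := hΨodd 0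
    simp only [neg_zero] at this
    linarith
  -- there is M > 0 with Ψ M > 0
  obtain ⟨x, y, hxy, hΨxy⟩ := hΨstrict
  set M : ℝ := max |x| |y| with hM
  have hΨM : 0 < Ψ M := by
    have h1 : Ψ y ≤ Ψ M := hΨmono (le_trans (le_abs_self y) (le_max_right _ _))
    have h2 : Ψ (-M) ≤ Ψ x := hΨmono (by
      have : |x| ≤ M := le_max_left _ _
      have := neg_abs_le x
      linarith)
    rw [hΨodd] at h2
    linarith
  -- p is integrable
  have hp_integrable : Integrable p := by
    by_contra h
    rw [integral_undef h] at hp_int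
    norm_num at hp_int
  -- integrability of the shifted products
  have hint : ∀ c : ℝ, Integrable (fun u => Ψ (c + u) * p u) := by
    intro c
    have hm : AEStronglyMeasurable (fun u => Ψ (c + u) * p u) volume :=
      ((hΨmeas.comp (measurable_const_add c)).mul hp_meas).aestronglyMeasurable
    apply Integrable.mono' (hp_integrable.const_mul C₂) hm
    filter_upwards with u
    rw [Real.norm_eq_abs, abs_mul, abs_of_nonneg (hp_nonneg u)]
    exact mul_le_mul_of_nonneg_right (hΨbdd _) (hp_nonneg u)
  have hint2 : Integrable (fun u => Ψ (a - u) * p u) := by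
    have h := (hint a).comp_neg
    have : (fun u : ℝ => Ψ (a + -u) * p (-u)) = fun u => Ψ (a - u) * p u := by
      funext u
      rw [hp_symm, sub_eq_add_neg]
    rwa [this] at h
  -- symmetry: ∫ Ψ(a-u) p u = φ a
  have hsymm : ∫ u : ℝ, Ψ (a - u) * p u = φ a := by
    rw [hφ a]
    have := integral_neg_eq_self (fun u : ℝ => Ψ (a - u) * p u) volume
    rw [← this]
    congr 1
    funext u
    rw [hp_symm, sub_neg_eq_add]
  -- find b with Ψ b < Ψ (b + a), b ≥ 0
  obtain ⟨n, hn⟩ := Archimedean.arch M ha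
  have hkey : ∃ k : ℕ, Ψ (k * a) < Ψ ((k + 1) * a) := by
    by_contra h
    push_neg at h
    have hchain : ∀ m : ℕ, Ψ (m * a) ≤ 0 := by
      intro m
      induction m with
      | zero => simp [hΨ0]
      | succ m ih => exact le_trans (by exact_mod_cast h m) ih
    have : Ψ M ≤ Ψ (n * a) := hΨmono (by simpa [nsmul_eq_mul] using hn)
    have := hchain n
    linarith
  obtain ⟨k, hk⟩ := hkey
  set b : ℝ := k * a with hb
  have hba : ((k : ℝ) + 1) * a = b + a := by ring
  rw [hba] at hk
  -- the symmetrized integrand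
  set F : ℝ → ℝ := fun u => (Ψ (a + u) + Ψ (a - u)) * p u with hF
  have hF_nonneg : ∀ u : ℝ, 0 ≤ F u := by
    intro u
    apply mul_nonneg _ (hp_nonneg u)
    have h1 : Ψ (-(a - u)) ≤ Ψ (a + u) := hΨmono (by linarith)
    rw [hΨodd] at h1
    linarith
  have hF_int : Integrable F := by
    exact ((hint a).add hint2).congr (Filter.Eventually.of_forall fun u => by
      simp only [Pi.add_apply, hF]; ring)
  have hF_pos : ∀ u ∈ Set.Icc b (b + a), 0 < F u := by
    intro u hu
    apply mul_pos _ (hp_pos u)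
    have h1 : Ψ (u - a) ≤ Ψ b := hΨmono (by linarith [hu.2])
    have h2 : Ψ (b + a) ≤ Ψ (a + u) := hΨmono (by linarith [hu.1])
    have h3 : Ψ (a - u) = -Ψ (u - a) := by rw [← hΨodd]; ring_nf
    linarith
  -- ∫ F > 0
  have hFI_pos : 0 < ∫ u : ℝ, F u := by
    rw [integral_pos_iff_support_of_nonneg hF_nonneg hF_int]
    have hsub : Set.Icc b (b + a) ⊆ Function.support F := by
      intro u hu
      exact ne_of_gt (hF_pos u hu)
    calc (0 : ENNReal) < volume (Set.Icc b (b + a)) := by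
          rw [Real.volume_Icc]
          simp only [add_sub_cancel_left]
          exact ENNReal.ofReal_pos.mpr ha
      _ ≤ volume (Function.support F) := measure_mono hsub
  -- conclude
  have hsplit : ∫ u : ℝ, F u = φ a + φ a := by
    have heq : (fun u : ℝ => F u) = fun u => Ψ (a + u) * p u + Ψ (a - u) * p u := by
      funext u; rw [hF]; ring
    rw [heq, integral_add (hint a) hint2, hsymm, ← hφ a]
  rw [hsplit] at hFI_pos
  linarith
end

section
/- Let 𝒩: ℝ₊ → ℝ₊ be non-increasing with 𝒩(q) > 0 for q > 0, and suppose q ↦ q𝒩(q) is non-decreasing. Then for any x, u ∈ ℝ^d with ‖u‖ > ‖x‖, one has |𝒩(‖x+u‖) - 𝒩(‖x-u‖)| ≤ (‖x‖/‖u‖)(𝒩(‖x+u‖) + 𝒩(‖x-u‖)). -/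
private lemma key_ineq (N : ℝ → ℝ) (r a b : ℝ) (ha : 0 < a) (hr0 : 0 ≤ r)
    (hr1 : r < 1) (hab : b - a ≤ r * (a + b)) (hq : a * N a ≤ b * N b)
    (hNb : 0 ≤ N b) : N a - N b ≤ r * (N a + N b) := by
  nlinarith [mul_le_mul_of_nonneg_left hq (by linarith : (0:ℝ) ≤ 1 - r),
    mul_nonneg hNb (show (0:ℝ) ≤ (a - b) + r * (a + b) by linarith), ha.le]

/-- For a non-increasing `𝒩 : ℝ₊ → ℝ₊` with `q ↦ q𝒩(q)` non-decreasing and `‖u‖ > ‖x‖`: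
`|𝒩(‖x+u‖) - 𝒩(‖x-u‖)| ≤ (‖x‖/‖u‖)(𝒩(‖x+u‖) + 𝒩(‖x-u‖))`. -/
theorem nonlinearity_norm_lemma
    (d : ℕ) (N : ℝ → ℝ)
    (hN_nonneg : ∀ q : ℝ, 0 ≤ q → 0 ≤ N q)
    (hN_pos : ∀ q : ℝ, 0 < q → 0 < N q)
    (hN_anti : AntitoneOn N (Set.Ici (0:ℝ)))
    (hN_mono : MonotoneOn (fun q => q * N q) (Set.Ici (0:ℝ)))
    (x u : EuclideanSpace ℝ (Fin d))
    (hxu : ‖x‖ < ‖u‖) :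
    |N ‖x + u‖ - N ‖x - u‖| ≤ (‖x‖ / ‖u‖) * (N ‖x + u‖ + N ‖x - u‖) := by
  set a := ‖x + u‖ with ha_def
  set b := ‖x - u‖ with hb_def
  have hu : 0 < ‖u‖ := lt_of_le_of_lt (norm_nonneg x) hxu
  have hx : 0 ≤ ‖x‖ := norm_nonneg x
  have ha0 : 0 ≤ a := norm_nonneg _
  have hb0 : 0 ≤ b := norm_nonneg _
  -- r
  set r := ‖x‖ / ‖u‖ with hr_def
  have hr0 : 0 ≤ r := div_nonneg hx hu.le
  have hr1 : r < 1 := (div_lt_one hu).2 hxu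
  have hru : r * ‖u‖ = ‖x‖ := div_mul_cancel₀ _ hu.ne'
  -- a + b ≥ 2‖u‖
  have hsum : 2 * ‖u‖ ≤ a + b := by
    have : ‖(x + u) - (x - u)‖ ≤ a + b := norm_sub_le _ _
    have h2 : (x + u) - (x - u) = (2:ℝ) • u := by module
    rw [h2, norm_smul] at this
    simpa using this
  -- |a - b| ≤ 2‖x‖
  have hdiff1 : a - b ≤ 2 * ‖x‖ := by
    have h2 : x + u = (2:ℝ) • x + (u - x) := by module
    have := norm_add_le ((2:ℝ) • x) (u - x)
    rw [← h2, norm_smul, norm_sub_rev] at this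
    simp only [Real.norm_ofNat] at this
    linarith
  have hdiff2 : b - a ≤ 2 * ‖x‖ := by
    have h2 : x - u = (2:ℝ) • x - (x + u) := by module
    have := norm_sub_le ((2:ℝ) • x) (x + u)
    rw [← h2, norm_smul] at this
    simp only [Real.norm_ofNat] at this
    linarith
  -- positivity of a and b
  have ha : 0 < a := by
    have : ‖u‖ - ‖x‖ ≤ a := by
      have := norm_sub_le (x + u) x
      have h2 : (x + u) - x = u := by module
      rw [h2] at this; linarith
    linarith
  have hb : 0 < b := by
    have : ‖u‖ - ‖x‖ ≤ b := by
      have := norm_sub_le (x - u) x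
      have h2 : (x - u) - x = (-1:ℝ) • u := by module
      rw [h2, norm_smul] at this
      simp only [norm_neg, norm_one, one_mul] at this
      linarith
    linarith
  have habr : b - a ≤ r * (a + b) := by nlinarith
  have hbar : a - b ≤ r * (a + b) := by nlinarith
  rw [abs_sub_le_iff]
  constructor
  · rcases le_total a b with h | h
    · exact key_ineq N r a b ha hr0 hr1 habr
        (hN_mono (Set.mem_Ici.2 ha0) (Set.mem_Ici.2 hb0) h) (hN_nonneg b hb0)
    · have : N a ≤ N b := hN_anti (Set.mem_Ici.2 hb0) (Set.mem_Ici.2 ha0) h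
      nlinarith [hN_nonneg a ha0, hN_nonneg b hb0]
  · rcases le_total b a with h | h
    · have h' := key_ineq N r b a hb hr0 hr1 (by rw [show r*(b+a)=r*(a+b) from by ring]; exact hbar)
        (hN_mono (Set.mem_Ici.2 hb0) (Set.mem_Ici.2 ha0) h) (hN_nonneg a ha0)
      linarith
    · have : N b ≤ N a := hN_anti (Set.mem_Ici.2 ha0) (Set.mem_Ici.2 hb0) h
      nlinarith [hN_nonneg a ha0, hN_nonneg b hb0]
end

section
/- Let Ψ: ℝ^d → ℝ^d be given by Ψ(w) = w𝒩(‖w‖), with 𝒩: ℝ₊ → ℝ₊ non-increasing, positive on (0,∞), and q ↦ q𝒩(q) non-decreasing. Let p: ℝ^d → ℝ₊ be a symmetric probability density (p(u) = p(-u)) with finite first moment, and define φ(x) = ∫ Ψ(x+u) p(u) du. Then for any x ≠ 0 and any κ ∈ (0,1): ⟨φ(x), x⟩ ≥ 2(1-κ)‖x‖² ∫_{J(x)} 𝒩(‖x‖+‖u‖) p(u) du, where J(x) = {u ∈ ℝ^d : 0 ≤ ⟨u,x⟩ ≤ κ‖u‖‖x‖}. -/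
/-!
Pairing `u` with `-u` (the density is symmetric) gives
`⟪φ x, x⟫ = ½ ∫ p u * (𝒩(‖x+u‖)⟪x+u, x⟫ + 𝒩(‖x-u‖)⟪x-u, x⟫)`.
With `r = ‖x‖`, `t = ⟪u, x⟫ ≥ 0`, `a = ‖x+u‖ ≥ b = ‖x-u‖`, the bracket is `𝒩(a)(r²+t) + 𝒩(b)(r²-t)`.
If `t ≤ r²` it is at least `2r²𝒩(a)` because `𝒩` is non-increasing; if `t > r²`, the bound
`b𝒩(b) ≤ a𝒩(a)` reduces it to the polynomial inequality `a(t-r²) ≤ b(t+(2κ-1)r²)`, valid whenever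
`0 ≤ t ≤ κr‖u‖`. Hence the bracket is nonnegative everywhere (take `κ = 1`) and at least
`2(1-κ)r²𝒩(r+‖u‖)` on `J(x)`. Since `J(x)` and `-J(x)` meet only in the null hyperplane `x^⊥`, the
integral of the (even) bracket is at least twice its integral over `J(x)`.
-/

open MeasureTheory Set
open scoped RealInnerProductSpace

section Scalar

variable {N : ℝ → ℝ} {κ r s t a b : ℝ}

theorem mul_sub_sq_le_mul_add_sq (hκ0 : 0 < κ) (hκ1 : κ ≤ 1) (hb : 0 ≤ b)
    (ha2 : a ^ 2 = r ^ 2 + s ^ 2 + 2 * t) (hb2 : b ^ 2 = r ^ 2 + s ^ 2 - 2 * t)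
    (hrt : r ^ 2 ≤ t) (htκ : t ≤ κ * r * s) :
    a * (t - r ^ 2) ≤ b * (t + (2 * κ - 1) * r ^ 2) := by
  have ht0 : 0 ≤ t := (sq_nonneg r).trans hrt
  have hcone : 0 ≤ κ ^ 2 * r ^ 2 * s ^ 2 - t ^ 2 := by nlinarith
  have hcubic : 0 ≤ (t - r ^ 2) * (t ^ 2 + 2 * κ * r ^ 2 * t + κ * (1 + 2 * κ) * r ^ 4)
      + κ * (1 + κ) * r ^ 6 := by
    have : 0 ≤ t ^ 2 + 2 * κ * r ^ 2 * t + κ * (1 + 2 * κ) * r ^ 4 := by positivity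
    have : 0 ≤ r ^ 6 := by positivity
    nlinarith
  -- `κ/4` times the difference of the squares of the two sides is `hcone * (…) + (1 - κ) * hcubic`.
  have hsq : 0 ≤ (b * (t + (2 * κ - 1) * r ^ 2)) ^ 2 - (a * (t - r ^ 2)) ^ 2 := by
    have hid : κ / 4 * ((b * (t + (2 * κ - 1) * r ^ 2)) ^ 2 - (a * (t - r ^ 2)) ^ 2)
        = (κ ^ 2 * r ^ 2 * s ^ 2 - t ^ 2) * (t - (1 - κ) * r ^ 2) + (1 - κ) *
          ((t - r ^ 2) * (t ^ 2 + 2 * κ * r ^ 2 * t + κ * (1 + 2 * κ) * r ^ 4)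
            + κ * (1 + κ) * r ^ 6) := by
      linear_combination (κ / 4 * (t + (2 * κ - 1) * r ^ 2) ^ 2) * hb2
        - (κ / 4 * (t - r ^ 2) ^ 2) * ha2
    have : 0 ≤ κ / 4 * ((b * (t + (2 * κ - 1) * r ^ 2)) ^ 2 - (a * (t - r ^ 2)) ^ 2) := by
      rw [hid]
      have : 0 ≤ t - (1 - κ) * r ^ 2 := by nlinarith
      have : 0 ≤ 1 - κ := by linarith
      positivity
    exact (mul_nonneg_iff_of_pos_left (by positivity)).1 this
  have hrhs : 0 ≤ b * (t + (2 * κ - 1) * r ^ 2) := mul_nonneg hb (by nlinarith)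
  exact (abs_le_of_sq_le_sq' (by linarith) hrhs).2

theorem two_mul_one_sub_mul_sq_mul_le (hN_nonneg : ∀ q, 0 ≤ q → 0 ≤ N q)
    (hN_anti : AntitoneOn N (Ici 0)) (hN_mono : MonotoneOn (fun q => q * N q) (Ici 0))
    (hκ0 : 0 < κ) (hκ1 : κ ≤ 1) (ha : 0 ≤ a) (hb : 0 ≤ b)
    (ha2 : a ^ 2 = r ^ 2 + s ^ 2 + 2 * t) (hb2 : b ^ 2 = r ^ 2 + s ^ 2 - 2 * t)
    (ht0 : 0 ≤ t) (htκ : t ≤ κ * r * s) :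
    2 * (1 - κ) * r ^ 2 * N a ≤ N a * (r ^ 2 + t) + N b * (r ^ 2 - t) := by
  have hba : b ≤ a := by nlinarith
  have hNa := hN_nonneg a ha
  rcases le_or_gt t (r ^ 2) with hrt | hrt
  · have hNba : N a ≤ N b := hN_anti hb ha hba
    have hNb_mul : N a * (r ^ 2 - t) ≤ N b * (r ^ 2 - t) := by gcongr
    have : 0 ≤ κ * r ^ 2 * N a := by positivity
    linarith
  · have hb0 : 0 < b := by
      refine hb.lt_of_ne fun hb0 => ?_
      subst hb0
      have hrs : 0 < r * s := by nlinarith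
      have hrs_eq : (r - s) ^ 2 = 0 := by nlinarith
      obtain rfl : r = s := by linarith [pow_eq_zero_iff two_ne_zero |>.1 hrs_eq]
      nlinarith
    have key := mul_sub_sq_le_mul_add_sq hκ0 hκ1 hb ha2 hb2 hrt.le htκ
    have hqN : b * N b ≤ a * N a := hN_mono hb ha hba
    have : b * (N b * (t - r ^ 2)) ≤ b * (N a * (t + (2 * κ - 1) * r ^ 2)) :=
      calc b * (N b * (t - r ^ 2)) = b * N b * (t - r ^ 2) := by ring
        _ ≤ a * N a * (t - r ^ 2) := by gcongr
        _ = N a * (a * (t - r ^ 2)) := by ring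
        _ ≤ N a * (b * (t + (2 * κ - 1) * r ^ 2)) := by gcongr
        _ = b * (N a * (t + (2 * κ - 1) * r ^ 2)) := by ring
    nlinarith [le_of_mul_le_mul_left this hb0]

end Scalar

section InnerProduct

variable {E : Type*} [NormedAddCommGroup E] [InnerProductSpace ℝ E]

def symmInner (N : ℝ → ℝ) (x u : E) : ℝ :=
  N ‖x + u‖ * ⟪x + u, x⟫ + N ‖x - u‖ * ⟪x - u, x⟫

theorem symmInner_neg (N : ℝ → ℝ) (x u : E) : symmInner N x (-u) = symmInner N x u := by
  rw [symmInner, symmInner, ← sub_eq_add_neg, sub_neg_eq_add, add_comm]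

variable {N : ℝ → ℝ} {κ : ℝ} {x u : E}

theorem two_mul_one_sub_mul_sq_mul_le_symmInner (hN_nonneg : ∀ q, 0 ≤ q → 0 ≤ N q)
    (hN_anti : AntitoneOn N (Ici 0)) (hN_mono : MonotoneOn (fun q => q * N q) (Ici 0))
    (hκ0 : 0 < κ) (hκ1 : κ ≤ 1) (ht0 : 0 ≤ ⟪u, x⟫) (htκ : ⟪u, x⟫ ≤ κ * ‖u‖ * ‖x‖) :
    2 * (1 - κ) * ‖x‖ ^ 2 * N (‖x‖ + ‖u‖) ≤ symmInner N x u := by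
  have hpair := two_mul_one_sub_mul_sq_mul_le hN_nonneg hN_anti hN_mono hκ0 hκ1
    (norm_nonneg (x + u)) (norm_nonneg (x - u))
    (by rw [norm_add_sq_real, real_inner_comm]; ring)
    (by rw [norm_sub_sq_real, real_inner_comm]; ring)
    ht0 (by linarith [htκ] : ⟪u, x⟫ ≤ κ * ‖x‖ * ‖u‖)
  have hN : N (‖x‖ + ‖u‖) ≤ N ‖x + u‖ :=
    hN_anti (norm_nonneg _) (by positivity : (0 : ℝ) ≤ ‖x‖ + ‖u‖) (norm_add_le x u)
  have hκ : 0 ≤ 2 * (1 - κ) * ‖x‖ ^ 2 := mul_nonneg (by linarith) (sq_nonneg _)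
  calc 2 * (1 - κ) * ‖x‖ ^ 2 * N (‖x‖ + ‖u‖) ≤ 2 * (1 - κ) * ‖x‖ ^ 2 * N ‖x + u‖ := by gcongr
    _ ≤ symmInner N x u := by
      rw [symmInner, inner_add_left, inner_sub_left, real_inner_self_eq_norm_sq]
      linarith

theorem symmInner_nonneg (hN_nonneg : ∀ q, 0 ≤ q → 0 ≤ N q)
    (hN_anti : AntitoneOn N (Ici 0)) (hN_mono : MonotoneOn (fun q => q * N q) (Ici 0))
    (x u : E) : 0 ≤ symmInner N x u := by
  wlog ht : 0 ≤ ⟪u, x⟫ generalizing u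
  · rw [← symmInner_neg]
    exact this (-u) (by rw [inner_neg_left]; linarith)
  have := two_mul_one_sub_mul_sq_mul_le_symmInner (κ := 1) hN_nonneg hN_anti hN_mono one_pos
    le_rfl ht (by rw [one_mul]; exact real_inner_le_norm u x)
  simpa using this

theorem mul_symmInner_eq {p : E → ℝ} (hp_symm : ∀ u, p (-u) = p u) (x u : E) :
    p u * symmInner N x u
      = ⟪p u • (N ‖x + u‖ • (x + u)), x⟫ + ⟪p (-u) • (N ‖x + -u‖ • (x + -u)), x⟫ := by
  simp only [hp_symm, symmInner, ← sub_eq_add_neg, real_inner_smul_left]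
  ring

end InnerProduct

section Measure

theorem AntitoneOn.measurable_comp_of_nonneg {α : Type*} [MeasurableSpace α] {N : ℝ → ℝ}
    (hN : AntitoneOn N (Ici 0)) {f : α → ℝ} (hf : Measurable f) (hf_nonneg : ∀ a, 0 ≤ f a) :
    Measurable fun a => N (f a) := by
  have : Antitone fun q => N (max q 0) := fun q₁ q₂ hq =>
    hN (mem_Ici.2 (le_max_right _ _)) (mem_Ici.2 (le_max_right _ _)) (max_le_max_right 0 hq)
  convert this.measurable.comp hf using 1
  funext a
  simp [hf_nonneg a]

theorem two_mul_setIntegral_le_integral_of_even {G : Type*} [MeasurableSpace G] [AddGroup G]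
    [MeasurableNeg G] {μ : Measure G} [μ.IsNegInvariant] {f : G → ℝ} {J : Set G}
    (hf_even : ∀ u, f (-u) = f u) (hf_nonneg : ∀ u, 0 ≤ f u) (hf : Integrable f μ)
    (hJ : MeasurableSet J) (hJJ : μ (J ∩ -J) = 0) :
    2 * ∫ u in J, f u ∂μ ≤ ∫ u, f u ∂μ := by
  have hneg : ∫ u in -J, f u ∂μ = ∫ u in J, f u ∂μ := by
    rw [← integral_indicator hJ.neg, ← integral_indicator hJ, ← integral_neg_eq_self]
    congr 1 with u
    by_cases hu : u ∈ J <;> simp [hu, hf_even]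
  calc 2 * ∫ u in J, f u ∂μ = ∫ u in J ∪ -J, f u ∂μ := by
        rw [setIntegral_union₀ hJJ hJ.neg.nullMeasurableSet hf.integrableOn hf.integrableOn, hneg]
        ring
    _ ≤ ∫ u, f u ∂μ := setIntegral_le_integral hf (ae_of_all _ hf_nonneg)

open Submodule in
theorem Measure.addHaar_setOf_inner_eq_zero {E : Type*} [NormedAddCommGroup E]
    [InnerProductSpace ℝ E] [FiniteDimensional ℝ E] [MeasurableSpace E] [BorelSpace E]
    (μ : Measure E) [μ.IsAddHaarMeasure] {x : E} (hx : x ≠ 0) : μ {u | ⟪u, x⟫ = 0} = 0 := by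
  have : {u : E | ⟪u, x⟫ = 0} = ((ℝ ∙ x)ᗮ : Submodule ℝ E) := by
    ext u
    exact mem_orthogonal_singleton_iff_inner_left.symm
  rw [this]
  refine Measure.addHaar_submodule μ _ fun h => hx ?_
  rwa [orthogonal_eq_top_iff, span_singleton_eq_bot] at h

theorem Measure.addHaar_inter_neg_eq_zero {E : Type*} [NormedAddCommGroup E]
    [InnerProductSpace ℝ E] [FiniteDimensional ℝ E] [MeasurableSpace E] [BorelSpace E]
    (μ : Measure E) [μ.IsAddHaarMeasure] {x : E} (hx : x ≠ 0) {J : Set E}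
    (hJ : ∀ u ∈ J, 0 ≤ ⟪u, x⟫) : μ (J ∩ -J) = 0 := by
  refine measure_mono_null (fun u hu => ?_) (Measure.addHaar_setOf_inner_eq_zero μ hx)
  have := hJ _ hu.2
  rw [inner_neg_left] at this
  exact le_antisymm (by linarith) (hJ u hu.1)

theorem integrable_comp_add_norm_mul {E : Type*} [NormedAddCommGroup E] [MeasurableSpace E]
    [OpensMeasurableSpace E] {μ : Measure E} {N : ℝ → ℝ} {p : E → ℝ}
    (hN_nonneg : ∀ q, 0 ≤ q → 0 ≤ N q) (hN_anti : AntitoneOn N (Ici 0)) (hp : Integrable p μ)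
    {r : ℝ} (hr : 0 ≤ r) : Integrable (fun u => N (r + ‖u‖) * p u) μ :=
  hp.bdd_mul (c := N r) (hN_anti.measurable_comp_of_nonneg (by fun_prop)
    (fun u => by positivity)).aestronglyMeasurable (ae_of_all _ fun u => by
      rw [Real.norm_of_nonneg (hN_nonneg _ (by positivity))]
      exact hN_anti hr (mem_Ici.2 (by positivity)) (le_add_of_nonneg_right (norm_nonneg u)))

end Measure

section Smoothing

variable {E : Type*} [NormedAddCommGroup E] [InnerProductSpace ℝ E] [MeasurableSpace E]
  [BorelSpace E] [SecondCountableTopology E] {μ : Measure E} {N : ℝ → ℝ} {p : E → ℝ} {C : ℝ}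

theorem integrable_smul_smul_add (hN : Measurable fun w : E => N ‖w‖)
    (hΨ : ∀ w : E, ‖N ‖w‖ • w‖ ≤ C) (hp : Integrable p μ) (x : E) :
    Integrable (fun u => p u • (N ‖x + u‖ • (x + u))) μ :=
  hp.smul_bdd C
    ((hN.comp (measurable_const_add x)).smul (measurable_const_add x)).aestronglyMeasurable
    (ae_of_all _ fun u => hΨ (x + u))

variable [μ.IsNegInvariant]

theorem integrable_mul_symmInner (hN : Measurable fun w : E => N ‖w‖)
    (hΨ : ∀ w : E, ‖N ‖w‖ • w‖ ≤ C) (hp : Integrable p μ) (hp_symm : ∀ u, p (-u) = p u) (x : E) :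
    Integrable (fun u => p u * symmInner N x u) μ := by
  have h := (integrable_smul_smul_add hN hΨ hp x).inner_const (𝕜 := ℝ) x
  simp only [mul_symmInner_eq hp_symm]
  exact h.add h.comp_neg

theorem inner_integral_eq_half_integral_symmInner [CompleteSpace E]
    (hN : Measurable fun w : E => N ‖w‖) (hΨ : ∀ w : E, ‖N ‖w‖ • w‖ ≤ C) (hp : Integrable p μ)
    (hp_symm : ∀ u, p (-u) = p u) (x : E) :
    ⟪∫ u, p u • (N ‖x + u‖ • (x + u)) ∂μ, x⟫ = (∫ u, p u * symmInner N x u ∂μ) / 2 := by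
  have hΨp := integrable_smul_smul_add hN hΨ hp x
  have h := hΨp.inner_const (𝕜 := ℝ) x
  simp only [mul_symmInner_eq hp_symm]
  rw [integral_add h h.comp_neg, integral_neg_eq_self (fun u => ⟪p u • (N ‖x + u‖ • (x + u)), x⟫),
    real_inner_comm, ← integral_inner hΨp]
  simp only [real_inner_comm x]
  ring

end Smoothing

theorem joint_nonlinearity_inner_bound_general
    (d : ℕ) (N : ℝ → ℝ)
    (hN_nonneg : ∀ q : ℝ, 0 ≤ q → 0 ≤ N q)
    (hN_anti : AntitoneOn N (Set.Ici (0:ℝ)))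
    (hN_mono : MonotoneOn (fun q => q * N q) (Set.Ici (0:ℝ)))
    (C : ℝ) (hΨbdd : ∀ w : EuclideanSpace ℝ (Fin d), ‖N ‖w‖ • w‖ ≤ C)
    (p : EuclideanSpace ℝ (Fin d) → ℝ)
    (hp_nonneg : ∀ u, 0 ≤ p u)
    (hp_int : ∫ u, p u = 1)
    (hp_symm : ∀ u, p (-u) = p u)
    (φ : EuclideanSpace ℝ (Fin d) → EuclideanSpace ℝ (Fin d))
    (hφ : ∀ x, φ x = ∫ u, p u • (N ‖x + u‖ • (x + u)))
    (x : EuclideanSpace ℝ (Fin d)) (hx : x ≠ 0)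
    (κ : ℝ) (hκ : κ ∈ Set.Ioo (0:ℝ) 1) :
    2 * (1 - κ) * ‖x‖ ^ 2 *
        ∫ u in {u : EuclideanSpace ℝ (Fin d) | 0 ≤ ⟪u, x⟫ ∧ ⟪u, x⟫ ≤ κ * ‖u‖ * ‖x‖},
          N (‖x‖ + ‖u‖) * p u
      ≤ ⟪φ x, x⟫ := by
  set J := {u : EuclideanSpace ℝ (Fin d) | 0 ≤ ⟪u, x⟫ ∧ ⟪u, x⟫ ≤ κ * ‖u‖ * ‖x‖}
  have hp : Integrable p := .of_integral_ne_zero (by rw [hp_int]; exact one_ne_zero)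
  have hN := hN_anti.measurable_comp_of_nonneg (measurable_norm (α := EuclideanSpace ℝ (Fin d)))
    norm_nonneg
  have hf := integrable_mul_symmInner (μ := volume) hN hΨbdd hp hp_symm x
  have hJ : MeasurableSet J := by
    change MeasurableSet ({u | 0 ≤ ⟪u, x⟫} ∩ {u | ⟪u, x⟫ ≤ κ * ‖u‖ * ‖x‖})
    exact (isClosed_le (by fun_prop) (by fun_prop)).measurableSet.inter
      (isClosed_le (by fun_prop) (by fun_prop)).measurableSet
  have hlow : ∀ u ∈ J, 2 * (1 - κ) * ‖x‖ ^ 2 * (N (‖x‖ + ‖u‖) * p u) ≤ p u * symmInner N x u :=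
    fun u hu => by
      rw [← mul_assoc, mul_comm _ (p u)]
      exact mul_le_mul_of_nonneg_left (two_mul_one_sub_mul_sq_mul_le_symmInner hN_nonneg hN_anti
        hN_mono hκ.1 hκ.2.le hu.1 hu.2) (hp_nonneg u)
  have hhalf := two_mul_setIntegral_le_integral_of_even (fun u => by rw [hp_symm, symmInner_neg])
    (fun u => mul_nonneg (hp_nonneg u) (symmInner_nonneg hN_nonneg hN_anti hN_mono x u)) hf hJ
    (Measure.addHaar_inter_neg_eq_zero volume hx fun u hu => hu.1)
  rw [hφ, inner_integral_eq_half_integral_symmInner hN hΨbdd hp hp_symm, ← integral_const_mul]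
  have hg := integrable_comp_add_norm_mul hN_nonneg hN_anti hp (norm_nonneg x)
  linarith [setIntegral_mono_on (hg.const_mul _).integrableOn hf.integrableOn hJ hlow]

/-- For the joint nonlinearity `Ψ(w) = 𝒩(‖w‖) w` (bounded), and a symmetric probability density
`p` with finite first moment, the smoothed map `φ(x) = ∫ Ψ(x+u) p(u) du` satisfies
`⟨φ(x), x⟩ ≥ 2(1-κ)‖x‖² ∫_{J(x)} 𝒩(‖x‖+‖u‖) p(u) du`,
where `J(x) = {u : 0 ≤ ⟨u,x⟩ ≤ κ‖u‖‖x‖}`, for any `x ≠ 0` and `κ ∈ (0,1)`. -/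
theorem joint_nonlinearity_inner_bound
    (d : ℕ) (N : ℝ → ℝ)
    (hN_nonneg : ∀ q : ℝ, 0 ≤ q → 0 ≤ N q)
    (hN_pos : ∀ q : ℝ, 0 < q → 0 < N q)
    (hN_anti : AntitoneOn N (Set.Ici (0:ℝ)))
    (hN_mono : MonotoneOn (fun q => q * N q) (Set.Ici (0:ℝ)))
    (C : ℝ) (hΨbdd : ∀ w : EuclideanSpace ℝ (Fin d), ‖N ‖w‖ • w‖ ≤ C)
    (p : EuclideanSpace ℝ (Fin d) → ℝ)
    (hp_nonneg : ∀ u, 0 ≤ p u)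
    (hp_meas : Measurable p)
    (hp_int : ∫ u, p u = 1)
    (hp_symm : ∀ u, p (-u) = p u)
    (hp_moment : Integrable (fun u => ‖u‖ * p u))
    (φ : EuclideanSpace ℝ (Fin d) → EuclideanSpace ℝ (Fin d))
    (hφ : ∀ x, φ x = ∫ u, p u • (N ‖x + u‖ • (x + u)))
    (x : EuclideanSpace ℝ (Fin d)) (hx : x ≠ 0)
    (κ : ℝ) (hκ : κ ∈ Set.Ioo (0:ℝ) 1) :
    2 * (1 - κ) * ‖x‖ ^ 2 *
        ∫ u in {u : EuclideanSpace ℝ (Fin d) | 0 ≤ ⟪u, x⟫ ∧ ⟪u, x⟫ ≤ κ * ‖u‖ * ‖x‖},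
          N (‖x‖ + ‖u‖) * p u
      ≤ ⟪φ x, x⟫ :=
  joint_nonlinearity_inner_bound_general d N hN_nonneg hN_anti hN_mono C hΨbdd p hp_nonneg hp_int
    hp_symm φ hφ x hx κ hκ
end

section
/- Let (z^t) be a nonnegative real sequence satisfying z^{t+1} ≤ (1 - r₁^t) z^t + r₂^t where a₁/(t+1)^{δ₁} ≤ r₁^t ≤ 1 and 0 ≤ r₂^t ≤ a₂/(t+1)^{δ₂}, with a₁, a₂ > 0 and 0 < δ₁ < δ₂, δ₁ < 1. Then z^t = O(1/t^{δ₂ - δ₁}), i.e., there is a constant C such that z^t ≤ C/(t+1)^{δ₂-δ₁} for all t. -/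
/-!
Write `β = δ₂ - δ₁` and `s = t + 1`. The bound `b_t = C / s^β` is an invariant of the worst case
of the recursion once `t` is large: Bernoulli's inequality `(s / (s + 1))^β ≥ 1 - β / s` gives
`b_t - b_{t+1} ≤ C β / s^(β+1)`, while the contraction gains `a₁ C / s^(δ₂)` and the noise costs at
most `a₂ / s^(δ₂)`. As `δ₁ < 1`, the gain dominates both once `β ≤ (a₁ / 2) s^(1-δ₁)` and
`a₂ ≤ a₁ C / 2`. Taking `C` large enough to cover the finitely many initial terms as well, induction
on `t` gives the claim.
-/

open Real Filter

lemma one_sub_div_le_div_add_one_rpow {s β : ℝ} (hs : 0 < s) (hβ : 0 ≤ β) :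
    1 - β / s ≤ (s / (s + 1)) ^ β := by
  have hlog : -s⁻¹ ≤ log (s / (s + 1)) := by
    have := one_sub_inv_le_log_of_pos (show 0 < s / (s + 1) by positivity)
    rwa [inv_div, add_div, div_self hs.ne', sub_add_cancel_left, one_div] at this
  calc 1 - β / s ≤ log (s / (s + 1)) * β + 1 := by
        rw [div_eq_mul_inv]; nlinarith
    _ ≤ (s / (s + 1)) ^ β := by
        rw [rpow_def_of_pos (by positivity)]; exact add_one_le_exp _

lemma eventually_le_const_mul_rpow_natCast_add_one {c κ : ℝ} (hc : 0 < c) (hκ : 0 < κ) (b : ℝ) :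
    ∀ᶠ t : ℕ in atTop, b ≤ c * ((t : ℝ) + 1) ^ κ :=
  (((tendsto_rpow_atTop hκ).comp (tendsto_atTop_add_const_right _ 1
    tendsto_natCast_atTop_atTop)).const_mul_atTop hc).eventually_ge_atTop b

lemma recursion_step_preserves_rpow_bound {a₁ a₂ δ₁ δ₂ C s : ℝ} (hs : 0 < s) (hδ : δ₁ ≤ δ₂)
    (hC : 0 ≤ C) (ha₂ : a₂ ≤ a₁ * C / 2) (hs_large : δ₂ - δ₁ ≤ a₁ / 2 * s ^ (1 - δ₁)) :
    (1 - a₁ / s ^ δ₁) * (C / s ^ (δ₂ - δ₁)) + a₂ / s ^ δ₂ ≤ C / (s + 1) ^ (δ₂ - δ₁) := by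
  set β := δ₂ - δ₁
  have hP : 0 < s ^ δ₁ := rpow_pos_of_pos hs _
  have hQ : 0 < s ^ β := rpow_pos_of_pos hs _
  have hS : 0 < (s + 1) ^ β := rpow_pos_of_pos (by linarith) _
  have hPQ : s ^ δ₂ = s ^ δ₁ * s ^ β := by rw [← rpow_add hs]; congr 1; ring
  have hbern := one_sub_div_le_div_add_one_rpow hs (sub_nonneg.2 hδ)
  rw [div_rpow hs.le (by linarith), le_div_iff₀ hS] at hbern
  have hβP : β * s ^ δ₁ ≤ a₁ / 2 * s := by
    calc β * s ^ δ₁ ≤ a₁ / 2 * s ^ (1 - δ₁) * s ^ δ₁ := mul_le_mul_of_nonneg_right hs_large hP.le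
      _ = a₁ / 2 * s := by rw [mul_assoc, ← rpow_add hs]; norm_num
  have hgain : C * β * s ^ δ₁ + a₂ * s ≤ a₁ * C * s := by
    nlinarith [mul_le_mul_of_nonneg_left hβP hC, mul_le_mul_of_nonneg_right ha₂ hs.le]
  calc (1 - a₁ / s ^ δ₁) * (C / s ^ β) + a₂ / s ^ δ₂
      ≤ C * (1 - β / s) / s ^ β := by
        rw [hPQ]
        field_simp
        linarith
    _ ≤ C / (s + 1) ^ β := by
        rw [div_le_div_iff₀ hQ hS]; exact mul_le_mul_of_nonneg_left hbern hC |>.trans_eq' (by ring)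

theorem recursion_rate_case1_general
    (z r₁ r₂ : ℕ → ℝ) (a₁ a₂ δ₁ δ₂ : ℝ)
    (ha₁ : 0 < a₁)
    (hδ₁₂ : δ₁ < δ₂) (hδ₁lt1 : δ₁ < 1)
    (hz_nonneg : ∀ t : ℕ, 0 ≤ z t)
    (hr₁ : ∀ t : ℕ, a₁ / ((t : ℝ) + 1) ^ δ₁ ≤ r₁ t ∧ r₁ t ≤ 1)
    (hr₂ : ∀ t : ℕ, 0 ≤ r₂ t ∧ r₂ t ≤ a₂ / ((t : ℝ) + 1) ^ δ₂)
    (hrec : ∀ t : ℕ, z (t + 1) ≤ (1 - r₁ t) * z t + r₂ t) :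
    ∃ C : ℝ, ∀ t : ℕ, z t ≤ C / ((t : ℝ) + 1) ^ (δ₂ - δ₁) := by
  obtain ⟨T, hT⟩ := eventually_atTop.1 <| eventually_le_const_mul_rpow_natCast_add_one
    (half_pos ha₁) (sub_pos.2 hδ₁lt1) (δ₂ - δ₁)
  obtain ⟨M, hM⟩ := ((Set.finite_Iic T).image fun t ↦ z t * ((t : ℝ) + 1) ^ (δ₂ - δ₁)).bddAbove
  set C := max M (2 * a₂ / a₁)
  have hbase : ∀ t ≤ T, z t ≤ C / ((t : ℝ) + 1) ^ (δ₂ - δ₁) := fun t ht ↦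
    (le_div_iff₀ (by positivity)).2 <| (hM ⟨t, ht, rfl⟩).trans (le_max_left _ _)
  have hC : 0 ≤ C := by simpa using (hz_nonneg 0).trans (hbase 0 T.zero_le)
  have ha₂ : a₂ ≤ a₁ * C / 2 := by
    have := (div_le_iff₀' ha₁).1 (le_max_right M (2 * a₂ / a₁))
    linarith
  refine ⟨C, fun t ↦ ?_⟩
  induction t with
  | zero => exact hbase 0 T.zero_le
  | succ t ih =>
    rcases le_or_gt (t + 1) T with ht | ht
    · exact hbase _ ht
    have hs : (0 : ℝ) < t + 1 := by positivity
    calc z (t + 1) ≤ (1 - r₁ t) * z t + r₂ t := hrec t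
      _ ≤ (1 - a₁ / ((t : ℝ) + 1) ^ δ₁) * (C / ((t : ℝ) + 1) ^ (δ₂ - δ₁))
            + a₂ / ((t : ℝ) + 1) ^ δ₂ :=
        add_le_add (mul_le_mul (by linarith [(hr₁ t).1]) ih (hz_nonneg t)
          (by linarith [(hr₁ t).1, (hr₁ t).2])) (hr₂ t).2
      _ ≤ C / ((t : ℝ) + 1 + 1) ^ (δ₂ - δ₁) :=
        recursion_step_preserves_rpow_bound hs hδ₁₂.le hC ha₂ (hT t (by omega))
      _ = C / (((t + 1 : ℕ) : ℝ) + 1) ^ (δ₂ - δ₁) := by push_cast; rfl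

/-- Deterministic recursion lemma, case 1: if `z^{t+1} ≤ (1-r₁^t)z^t + r₂^t` with
`a₁/(t+1)^{δ₁} ≤ r₁^t ≤ 1`, `0 ≤ r₂^t ≤ a₂/(t+1)^{δ₂}`, `0 < δ₁ < δ₂`, `δ₁ < 1`,
then `z^t = O(1/t^{δ₂-δ₁})`. -/
theorem recursion_rate_case1
    (z r₁ r₂ : ℕ → ℝ) (a₁ a₂ δ₁ δ₂ : ℝ)
    (ha₁ : 0 < a₁) (ha₂ : 0 < a₂)
    (hδ₁ : 0 < δ₁) (hδ₁₂ : δ₁ < δ₂) (hδ₁lt1 : δ₁ < 1)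
    (hz_nonneg : ∀ t : ℕ, 0 ≤ z t)
    (hr₁ : ∀ t : ℕ, a₁ / ((t : ℝ) + 1) ^ δ₁ ≤ r₁ t ∧ r₁ t ≤ 1)
    (hr₂ : ∀ t : ℕ, 0 ≤ r₂ t ∧ r₂ t ≤ a₂ / ((t : ℝ) + 1) ^ δ₂)
    (hrec : ∀ t : ℕ, z (t + 1) ≤ (1 - r₁ t) * z t + r₂ t) :
    ∃ C : ℝ, ∀ t : ℕ, z t ≤ C / ((t : ℝ) + 1) ^ (δ₂ - δ₁) :=
  recursion_rate_case1_general z r₁ r₂ a₁ a₂ δ₁ δ₂ ha₁ hδ₁₂ hδ₁lt1 hz_nonneg hr₁ hr₂ hrec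
end

section
/- Let (z^t) be a nonnegative real sequence satisfying z^{t+1} ≤ (1 - r₁^t) z^t + r₂^t where a₁/(t+1) ≤ r₁^t ≤ 1 and 0 ≤ r₂^t ≤ a₂/(t+1)^{δ₂}, with δ₂ > 1 and a₁ > δ₂ - 1. Then z^t = O(1/t^{δ₂ - 1}). -/
/-!
With `p = δ₂ - 1` one proves `z t ≤ C / (t + 1) ^ p` by induction, for `C` large enough that
`a₂ ≤ C (a₁ - p)`. Writing `T = t + 1`, the step needs
`(1 - a₁ / T) C / T ^ p + a₂ / T ^ (p + 1) ≤ C (1 - p / T) / T ^ p ≤ C / (T + 1) ^ p`,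
and the last inequality is Bernoulli's `(1 + 1 / T) ^ p ≤ 1 + p / T` for `0 ≤ p ≤ 1`.
-/

open Real

lemma one_sub_div_mul_add_one_rpow_le {T p : ℝ} (hT : 0 < T) (hp0 : 0 ≤ p) (hp1 : p ≤ 1) :
    (1 - p / T) * (T + 1) ^ p ≤ T ^ p := by
  have hsplit : (T + 1) ^ p = T ^ p * (1 + 1 / T) ^ p := by
    rw [← mul_rpow hT.le (by positivity)]
    congr 1
    field_simp
  have hbern : (1 + 1 / T) ^ p ≤ 1 + p * (1 / T) :=
    rpow_one_add_le_one_add_mul_self (by linarith [one_div_pos.mpr hT]) hp0 hp1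
  have hTp : 0 ≤ T ^ p := rpow_nonneg hT.le p
  rcases le_or_gt 0 (1 - p / T) with hpos | hneg
  · calc (1 - p / T) * (T + 1) ^ p = T ^ p * ((1 - p / T) * (1 + 1 / T) ^ p) := by
          rw [hsplit]; ring
      _ ≤ T ^ p * ((1 - p / T) * (1 + p * (1 / T))) := by gcongr
      _ = T ^ p * (1 - (p / T) ^ 2) := by ring
      _ ≤ T ^ p := by nlinarith [sq_nonneg (p / T)]
  · have : 0 ≤ (T + 1) ^ p := rpow_nonneg (by linarith) p
    nlinarith

lemma mul_add_div_rpow_le_div_add_one_rpow {a b p r x C T : ℝ} (hT : 0 < T) (hp0 : 0 ≤ p)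
    (hp1 : p ≤ 1) (hC : 0 ≤ C) (hb : b ≤ C * (a - p)) (hr : a / T ≤ r) (hr1 : r ≤ 1)
    (hx : x ≤ C / T ^ p) :
    (1 - r) * x + b / T ^ (p + 1) ≤ C / (T + 1) ^ p := by
  have hTp : 0 < T ^ p := rpow_pos_of_pos hT p
  have hx' : (1 - r) * x ≤ (1 - a / T) * (C / T ^ p) :=
    calc (1 - r) * x ≤ (1 - r) * (C / T ^ p) := mul_le_mul_of_nonneg_left hx (by linarith)
      _ ≤ (1 - a / T) * (C / T ^ p) := by gcongr
  have hb' : b / T ^ (p + 1) ≤ C * (a - p) / T / T ^ p := by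
    rw [rpow_add hT, rpow_one, div_div, mul_comm T]
    gcongr
  calc (1 - r) * x + b / T ^ (p + 1)
      ≤ (1 - a / T) * (C / T ^ p) + C * (a - p) / T / T ^ p := add_le_add hx' hb'
    _ = C * (1 - p / T) / T ^ p := by field_simp; ring
    _ ≤ C / (T + 1) ^ p := by
      rw [div_le_div_iff₀ hTp (rpow_pos_of_pos (by linarith) p), mul_assoc]
      exact mul_le_mul_of_nonneg_left (one_sub_div_mul_add_one_rpow_le hT hp0 hp1) hC

lemma le_div_rpow_of_le_one_sub_mul_add {x r : ℕ → ℝ} {a b p C : ℝ}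
    (hp0 : 0 ≤ p) (hp1 : p ≤ 1) (hC : 0 ≤ C) (hx0 : x 0 ≤ C) (hb : b ≤ C * (a - p))
    (hr : ∀ t : ℕ, a / ((t : ℝ) + 1) ≤ r t ∧ r t ≤ 1)
    (hrec : ∀ t : ℕ, x (t + 1) ≤ (1 - r t) * x t + b / ((t : ℝ) + 1) ^ (p + 1)) (t : ℕ) :
    x t ≤ C / ((t : ℝ) + 1) ^ p := by
  induction t with
  | zero => simpa using hx0
  | succ t ih =>
    push_cast
    exact (hrec t).trans <| mul_add_div_rpow_le_div_add_one_rpow (by positivity) hp0 hp1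
      hC hb (hr t).1 (hr t).2 ih

theorem recursion_rate_case2_general
    (z r₁ r₂ : ℕ → ℝ) (a₁ a₂ δ₂ : ℝ)
    (hδ₂ : 1 < δ₂) (ha₁ : δ₂ - 1 < a₁)
    (hz_nonneg : ∀ t : ℕ, 0 ≤ z t)
    (hr₁ : ∀ t : ℕ, a₁ / ((t : ℝ) + 1) ≤ r₁ t ∧ r₁ t ≤ 1)
    (hr₂ : ∀ t : ℕ, 0 ≤ r₂ t ∧ r₂ t ≤ a₂ / ((t : ℝ) + 1) ^ δ₂)
    (hrec : ∀ t : ℕ, z (t + 1) ≤ (1 - r₁ t) * z t + r₂ t) :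
    ∃ C : ℝ, ∀ t : ℕ, z t ≤ C / ((t : ℝ) + 1) ^ (δ₂ - 1) := by
  -- `a₁ ≤ r₁ 0 ≤ 1`, so the exponent `δ₂ - 1` is in the concave range of Bernoulli
  have hδ₂_le : δ₂ - 1 ≤ 1 := by
    have := (hr₁ 0).1.trans (hr₁ 0).2
    norm_num at this
    linarith
  refine ⟨max (z 0) (a₂ / (a₁ - (δ₂ - 1))),
    le_div_rpow_of_le_one_sub_mul_add (b := a₂) (by linarith) hδ₂_le
      ((hz_nonneg 0).trans (le_max_left _ _)) (le_max_left _ _) ?_ hr₁ fun t => ?_⟩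
  · rw [← div_le_iff₀ (by linarith)]
    exact le_max_right _ _
  · rw [sub_add_cancel]
    linarith [hrec t, (hr₂ t).2]

/-- Deterministic recursion lemma, case 2: if `z^{t+1} ≤ (1-r₁^t)z^t + r₂^t` with
`a₁/(t+1) ≤ r₁^t ≤ 1`, `0 ≤ r₂^t ≤ a₂/(t+1)^{δ₂}`, `δ₂ > 1`, `a₁ > δ₂ - 1`,
then `z^t = O(1/t^{δ₂-1})`. -/
theorem recursion_rate_case2
    (z r₁ r₂ : ℕ → ℝ) (a₁ a₂ δ₂ : ℝ)
    (ha₂ : 0 < a₂)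
    (hδ₂ : 1 < δ₂) (ha₁ : δ₂ - 1 < a₁)
    (hz_nonneg : ∀ t : ℕ, 0 ≤ z t)
    (hr₁ : ∀ t : ℕ, a₁ / ((t : ℝ) + 1) ≤ r₁ t ∧ r₁ t ≤ 1)
    (hr₂ : ∀ t : ℕ, 0 ≤ r₂ t ∧ r₂ t ≤ a₂ / ((t : ℝ) + 1) ^ δ₂)
    (hrec : ∀ t : ℕ, z (t + 1) ≤ (1 - r₁ t) * z t + r₂ t) :
    ∃ C : ℝ, ∀ t : ℕ, z t ≤ C / ((t : ℝ) + 1) ^ (δ₂ - 1) :=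
  recursion_rate_case2_general z r₁ r₂ a₁ a₂ δ₂ hδ₂ ha₁ hz_nonneg hr₁ hr₂ hrec
end

section
/- Let (z^t) be a nonnegative real sequence satisfying z^{t+1} ≤ (1 - r₁^t) z^t + r₂^t where a₁/(t+1) ≤ r₁^t ≤ 1 and 0 ≤ r₂^t ≤ a₂/(t+1)^{δ₂}, with δ₂ > 1 and 0 < a₁ < δ₂ - 1. Then for every ζ < a₁, z^t = O(1/t^ζ). -/
/-!
Fix `ζ' ∈ [ζ, a₁)` with `ζ' > 0` and compare `z` with `C / (t + 1) ^ ζ'`. Inductively, the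
recursion gives `z (t + 1) ≤ (C / T ^ ζ') (1 - a₁ / T) + a₂ / T ^ (ζ' + 1)` with `T = t + 1`;
once `a₂ ≤ C (a₁ - ζ')` this is at most `(C / T ^ ζ') (1 - ζ' / T)`, and Bernoulli's inequality
`1 - ζ' / T ≤ (T / (T + 1)) ^ ζ'` closes the induction. The gap `a₁ - ζ' > 0` absorbs the
perturbation because `δ₂ ≥ ζ' + 1`.
-/

open Real

lemma one_sub_div_le_rpow_div_add_one {ζ x : ℝ} (hζ : 0 ≤ ζ) (hx : 0 < x) :
    1 - ζ / x ≤ (x / (x + 1)) ^ ζ := by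
  have hlog : log ((x + 1) / x) * ζ ≤ ζ / x := by
    have : log ((x + 1) / x) ≤ 1 / x :=
      (log_le_sub_one_of_pos (by positivity)).trans_eq (by field_simp; ring)
    rw [div_eq_mul_one_div ζ, mul_comm ζ]
    exact mul_le_mul_of_nonneg_right this hζ
  calc 1 - ζ / x ≤ exp (-(ζ / x)) := by linarith [add_one_le_exp (-(ζ / x))]
    _ ≤ exp (log ((x + 1) / x) * -ζ) := by
        gcongr
        linarith
    _ = (x / (x + 1)) ^ ζ := by
        rw [← rpow_def_of_pos (by positivity), rpow_neg (by positivity), ← inv_rpow (by positivity),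
          inv_div]

lemma one_sub_div_mul_add_le_div_rpow_add_one {T a b ζ C w : ℝ} (hT : 0 < T) (hζ : 0 ≤ ζ)
    (hC : 0 ≤ C) (hcoef : a / T ≤ 1) (hw : w ≤ C / T ^ ζ) (hb : b ≤ C * (a - ζ)) :
    (1 - a / T) * w + b / T ^ (ζ + 1) ≤ C / (T + 1) ^ ζ := by
  calc (1 - a / T) * w + b / T ^ (ζ + 1)
      ≤ (1 - a / T) * (C / T ^ ζ) + C * (a - ζ) / T ^ (ζ + 1) := by
        have : 0 ≤ 1 - a / T := by linarith
        gcongr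
    _ = C / T ^ ζ * (1 - ζ / T) := by
        rw [rpow_add_one hT.ne']
        field_simp
        ring
    _ ≤ C / T ^ ζ * (T / (T + 1)) ^ ζ := by
        gcongr
        exact one_sub_div_le_rpow_div_add_one hζ hT
    _ = C / (T + 1) ^ ζ := by
        rw [div_rpow hT.le (by linarith)]
        field_simp

lemma le_div_rpow_of_le_one_sub_div_mul_add {z : ℕ → ℝ} {a b ζ C : ℝ} (hζ : 0 ≤ ζ)
    (hC : 0 ≤ C) (hb : b ≤ C * (a - ζ)) (hcoef : ∀ t : ℕ, a / ((t : ℝ) + 1) ≤ 1)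
    (hz₀ : z 0 ≤ C)
    (hrec : ∀ t : ℕ, z (t + 1) ≤ (1 - a / ((t : ℝ) + 1)) * z t + b / ((t : ℝ) + 1) ^ (ζ + 1)) :
    ∀ t : ℕ, z t ≤ C / ((t : ℝ) + 1) ^ ζ := by
  intro t
  induction t with
  | zero => simpa using hz₀
  | succ t ih =>
    push_cast
    exact (hrec t).trans
      (one_sub_div_mul_add_le_div_rpow_add_one (by positivity) hζ hC (hcoef t) ih hb)

theorem recursion_rate_case3_general
    (z r₁ r₂ : ℕ → ℝ) (a₁ a₂ δ₂ : ℝ)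
    (ha₂ : 0 < a₂)
    (ha₁pos : 0 < a₁) (ha₁ : a₁ < δ₂ - 1)
    (hz_nonneg : ∀ t : ℕ, 0 ≤ z t)
    (hr₁ : ∀ t : ℕ, a₁ / ((t : ℝ) + 1) ≤ r₁ t ∧ r₁ t ≤ 1)
    (hr₂ : ∀ t : ℕ, 0 ≤ r₂ t ∧ r₂ t ≤ a₂ / ((t : ℝ) + 1) ^ δ₂)
    (hrec : ∀ t : ℕ, z (t + 1) ≤ (1 - r₁ t) * z t + r₂ t) :
    ∀ ζ : ℝ, ζ < a₁ → ∃ C : ℝ, ∀ t : ℕ, z t ≤ C / ((t : ℝ) + 1) ^ ζ := by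
  intro ζ hζ
  set ζ' := max ζ (a₁ / 2)
  have hζ'₀ : 0 ≤ ζ' := (half_pos ha₁pos).le.trans (le_max_right _ _)
  have hζ'a₁ : ζ' < a₁ := max_lt hζ (half_lt_self ha₁pos)
  set C := max (z 0) (a₂ / (a₁ - ζ'))
  have hrec' (t : ℕ) : z (t + 1) ≤
      (1 - a₁ / ((t : ℝ) + 1)) * z t + a₂ / ((t : ℝ) + 1) ^ (ζ' + 1) := by
    have hT : (1 : ℝ) ≤ (t : ℝ) + 1 := le_add_of_nonneg_left t.cast_nonneg
    calc z (t + 1) ≤ (1 - r₁ t) * z t + r₂ t := hrec t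
      _ ≤ (1 - a₁ / ((t : ℝ) + 1)) * z t + a₂ / ((t : ℝ) + 1) ^ δ₂ := by
        gcongr
        exacts [hz_nonneg t, (hr₁ t).1, (hr₂ t).2]
      _ ≤ (1 - a₁ / ((t : ℝ) + 1)) * z t + a₂ / ((t : ℝ) + 1) ^ (ζ' + 1) := by
        gcongr
        linarith
  have hbound := le_div_rpow_of_le_one_sub_div_mul_add hζ'₀
    ((hz_nonneg 0).trans (le_max_left _ _))
    ((div_le_iff₀ (sub_pos.2 hζ'a₁)).1 (le_max_right _ _))
    (fun t ↦ (hr₁ t).1.trans (hr₁ t).2) (le_max_left _ _) hrec'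
  refine ⟨C, fun t ↦ (hbound t).trans ?_⟩
  gcongr
  · exact le_add_of_nonneg_left t.cast_nonneg
  · exact le_max_left _ _

/-- Deterministic recursion lemma, case 3: if `z^{t+1} ≤ (1-r₁^t)z^t + r₂^t` with
`a₁/(t+1) ≤ r₁^t ≤ 1`, `0 ≤ r₂^t ≤ a₂/(t+1)^{δ₂}`, `δ₂ > 1`, `0 < a₁ < δ₂ - 1`,
then `z^t = O(1/t^ζ)` for every `ζ < a₁`. -/
theorem recursion_rate_case3
    (z r₁ r₂ : ℕ → ℝ) (a₁ a₂ δ₂ : ℝ)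
    (ha₂ : 0 < a₂)
    (hδ₂ : 1 < δ₂) (ha₁pos : 0 < a₁) (ha₁ : a₁ < δ₂ - 1)
    (hz_nonneg : ∀ t : ℕ, 0 ≤ z t)
    (hr₁ : ∀ t : ℕ, a₁ / ((t : ℝ) + 1) ≤ r₁ t ∧ r₁ t ≤ 1)
    (hr₂ : ∀ t : ℕ, 0 ≤ r₂ t ∧ r₂ t ≤ a₂ / ((t : ℝ) + 1) ^ δ₂)
    (hrec : ∀ t : ℕ, z (t + 1) ≤ (1 - r₁ t) * z t + r₂ t) :
    ∀ ζ : ℝ, ζ < a₁ → ∃ C : ℝ, ∀ t : ℕ, z t ≤ C / ((t : ℝ) + 1) ^ ζ :=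
  recursion_rate_case3_general z r₁ r₂ a₁ a₂ δ₂ ha₂ ha₁pos ha₁ hz_nonneg hr₁ hr₂ hrec
end
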